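/- arXiv:1807.01736 — 3 statements merged into one kernel-verified Lean document; each statement's English description precedes it below -/
import Mathlib

section
/- If P^a is an n×n row-stochastic matrix, Φ the zero-one partition matrix of a surjection φ: S → S_φ, and the identity Ω P^a Φ = Ω' P^a Φ holds for all valid weight matrices Ω, Ω' (the weight matrices of weighting functions ω that are nonnegative and sum to 1 on each partition), then for any two states s, s̃ in the same partition and any partition s_φ', Σ_{s' ∈ φ⁻¹(s_φ')} P^a(s,s') = Σ_{s' ∈ φ⁻¹(s_φ')} P^a(s̃,s'). -/
open Matrix BigOperators

theorem stmt_3 {S T : Type*} [Fintype S] [Fintype T] [DecidableEq T]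
    (φ : S → T) (hφ : Function.Surjective φ)
    (Φ : Matrix S T ℝ) (hΦ : ∀ s t, Φ s t = if φ s = t then 1 else 0)
    (P : Matrix S S ℝ) (hP0 : ∀ s s', 0 ≤ P s s') (hP1 : ∀ s, ∑ s', P s s' = 1)
    (h : ∀ (ω ω' : S → ℝ), (∀ s, 0 ≤ ω s) →
        (∀ t, ∑ s ∈ Finset.univ.filter (fun s => φ s = t), ω s = 1) →
        (∀ s, 0 ≤ ω' s) →
        (∀ t, ∑ s ∈ Finset.univ.filter (fun s => φ s = t), ω' s = 1) →
        (Matrix.of fun t s => if φ s = t then ω s else 0) * P * Φ =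
          (Matrix.of fun t s => if φ s = t then ω' s else 0) * P * Φ) :
    ∀ s₁ s₂ : S, φ s₁ = φ s₂ → ∀ t' : T,
      ∑ s' ∈ Finset.univ.filter (fun s' => φ s' = t'), P s₁ s' =
        ∑ s' ∈ Finset.univ.filter (fun s' => φ s' = t'), P s₂ s' := by
  intro s₁ s₂ h12 t'
  classical
  obtain ⟨g, hg⟩ := hφ.hasRightInverse
  set rep : S → T → S := fun s₀ t => if t = φ s₀ then s₀ else g t with hrep
  have hrepφ : ∀ s₀ t, φ (rep s₀ t) = t := by
    intro s₀ t
    simp only [hrep]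
    split
    · next heq => exact heq.symm
    · exact hg t
  have hrepself : ∀ s₀ : S, rep s₀ (φ s₀) = s₀ := by
    intro s₀; simp [hrep]
  set ωf : S → S → ℝ := fun s₀ s => if s = rep s₀ (φ s) then 1 else 0 with hωf
  have hω0 : ∀ s₀ s, 0 ≤ ωf s₀ s := by
    intro s₀ s; simp only [hωf]; split <;> norm_num
  have hωsum : ∀ s₀ t, ∑ s ∈ Finset.univ.filter (fun s => φ s = t), ωf s₀ s = 1 := by
    intro s₀ t
    rw [Finset.sum_eq_single (rep s₀ t)]
    · simp [hωf, hrepφ]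
    · intro b hb hne
      simp only [Finset.mem_filter] at hb
      simp [hωf, hb.2, hne]
    · intro habs
      exfalso; apply habs
      simp [hrepφ]
  have key : ∀ s₀ : S,
      ((Matrix.of fun t s => if φ s = t then ωf s₀ s else 0) * P * Φ) (φ s₀) t'
        = ∑ s' ∈ Finset.univ.filter (fun s' => φ s' = t'), P s₀ s' := by
    intro s₀
    have hrow : ∀ s', ((Matrix.of fun t s => if φ s = t then ωf s₀ s else 0) * P) (φ s₀) s'
        = P s₀ s' := by
      intro s'
      rw [Matrix.mul_apply]
      rw [Finset.sum_eq_single s₀]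
      · simp [hωf, hrepself]
      · intro b _ hne
        by_cases hb : φ b = φ s₀
        · have : rep s₀ (φ b) = s₀ := by rw [hb]; exact hrepself s₀
          simp [hωf, hb, hrepself, hne]
        · simp [hb]
      · intro habs; exact absurd (Finset.mem_univ s₀) habs
    rw [Matrix.mul_apply]
    simp only [hrow, hΦ]
    rw [Finset.sum_filter]
    exact Finset.sum_congr rfl fun x _ => by split <;> simp
  have := congrFun (congrFun (h (ωf s₁) (ωf s₂) (hω0 s₁) (hωsum s₁) (hω0 s₂) (hωsum s₂)) (φ s₁)) t'
  rw [key s₁] at this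
  rw [h12] at this
  rw [key s₂] at this
  exact this
end

section
/- (Theorem 1, bisimulation from model-reduction equations) Let M be a finite MDP with row-stochastic transition matrices P^a and reward vectors r^a, φ: S → S_φ a surjection with partition matrix Φ, and suppose for every valid weighting matrix Ω the induced abstract MDP with r_φ^a = Ω r^a and P_φ^a = Ω P^a Φ satisfies r^a = Φ r_φ^a and P^a Φ = Φ P_φ^a for all actions a. Then φ is a model reduction: for any s₁, s₂ with φ(s₁)=φ(s₂), (i) r^a(s₁) = r^a(s₂) for all a, and (ii) for all a and all partitions s_φ', Σ_{s' ∈ φ⁻¹(s_φ')} P^a(s₁,s') = Σ_{s' ∈ φ⁻¹(s_φ')} P^a(s₂,s'). -/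
open Matrix BigOperators

theorem stmt_5 {S T A : Type*} [Fintype S] [Fintype T] [DecidableEq T]
    (φ : S → T) (hφ : Function.Surjective φ)
    (Φ : Matrix S T ℝ) (hΦ : ∀ s t, Φ s t = if φ s = t then 1 else 0)
    (P : A → Matrix S S ℝ)
    (hP0 : ∀ a s s', 0 ≤ P a s s') (hP1 : ∀ a s, ∑ s', P a s s' = 1)
    (r : A → S → ℝ)
    (h : ∀ (ω : S → ℝ), (∀ s, 0 ≤ ω s) →
        (∀ t, ∑ s ∈ Finset.univ.filter (fun s => φ s = t), ω s = 1) →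
        ∀ a : A,
          r a = Φ.mulVec ((Matrix.of fun t s => if φ s = t then ω s else 0).mulVec (r a)) ∧
          P a * Φ = Φ * ((Matrix.of fun t s => if φ s = t then ω s else 0) * P a * Φ)) :
    ∀ s₁ s₂ : S, φ s₁ = φ s₂ →
      (∀ a, r a s₁ = r a s₂) ∧
      (∀ a, ∀ t' : T,
        ∑ s' ∈ Finset.univ.filter (fun s' => φ s' = t'), P a s₁ s' =
          ∑ s' ∈ Finset.univ.filter (fun s' => φ s' = t'), P a s₂ s') := by
  intro s₁ s₂ h12
  classical
  -- representative of each fiber, choosing s₁ for its own fiber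
  set c : T → S := fun t => if t = φ s₁ then s₁ else Function.surjInv hφ t with hc
  have hφc : ∀ t, φ (c t) = t := by
    intro t
    simp only [hc]
    split
    · simp [*]
    · exact Function.surjInv_eq hφ t
  have hcs₁ : c (φ s₁) = s₁ := by simp [hc]
  set ω : S → ℝ := fun s => if s = c (φ s) then 1 else 0 with hω
  have hω0 : ∀ s, 0 ≤ ω s := by
    intro s; simp only [hω]; split <;> norm_num
  have hωsum : ∀ t, ∑ s ∈ Finset.univ.filter (fun s => φ s = t), ω s = 1 := by
    intro t
    have : ∀ s ∈ Finset.univ.filter (fun s => φ s = t), ω s = if s = c t then 1 else 0 := by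
      intro s hs
      simp only [Finset.mem_filter] at hs
      simp [hω, hs.2]
    rw [Finset.sum_congr rfl this, Finset.sum_ite_eq' _ (c t) (fun _ => (1:ℝ))]
    simp [hφc t]
  -- action of Ω on vectors
  have hΩv : ∀ (v : S → ℝ) (t : T),
      ((Matrix.of fun t s => if φ s = t then ω s else 0).mulVec v) t = v (c t) := by
    intro v t
    simp only [mulVec, dotProduct, Matrix.of_apply]
    rw [Finset.sum_eq_single (c t)]
    · simp [hφc t, hω]
    · intro s _ hs
      by_cases h1 : φ s = t
      · simp [h1, hω, hs]
      · simp [h1]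
    · simp
  -- action of Ω on matrices
  have hΩM : ∀ (N : Matrix S T ℝ) (t : T) (t' : T),
      (((Matrix.of fun t s => if φ s = t then ω s else 0) : Matrix T S ℝ) * N) t t' = N (c t) t' := by
    intro N t t'
    simp only [Matrix.mul_apply, Matrix.of_apply]
    rw [Finset.sum_eq_single (c t)]
    · simp [hφc t, hω]
    · intro s _ hs
      by_cases h1 : φ s = t
      · simp [h1, hω, hs]
      · simp [h1]
    · simp
  -- action of Φ on vectors
  have hΦv : ∀ (w : T → ℝ) (s : S), Φ.mulVec w s = w (φ s) := by
    intro w s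
    simp only [mulVec, dotProduct, hΦ, ite_mul, one_mul, zero_mul]
    rw [Finset.sum_ite_eq]
    simp
  -- action of Φ on matrices
  have hΦM : ∀ (M : Matrix T T ℝ) (s : S) (t' : T), (Φ * M) s t' = M (φ s) t' := by
    intro M s t'
    simp only [Matrix.mul_apply, hΦ, ite_mul, one_mul, zero_mul]
    rw [Finset.sum_ite_eq]
    simp
  -- P a * Φ entries are fiber sums
  have hPΦ : ∀ (a : A) (s : S) (t' : T),
      (P a * Φ) s t' = ∑ s' ∈ Finset.univ.filter (fun s' => φ s' = t'), P a s s' := by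
    intro a s t'
    rw [Finset.sum_filter]
    simp only [Matrix.mul_apply, hΦ, mul_ite, mul_one, mul_zero]
  constructor
  · intro a
    have hr := (h ω hω0 hωsum a).1
    have := congrFun hr s₂
    rw [hΦv, hΩv, ← h12, hcs₁] at this
    exact this.symm
  · intro a t'
    have hPeq := (h ω hω0 hωsum a).2
    have key : ∀ s : S, (P a * Φ) s t' = (P a * Φ) (c (φ s)) t' := by
      intro s
      have := congrFun (congrFun hPeq s) t'
      rw [hΦM, Matrix.mul_assoc, hΩM] at this
      exact this
    have h2 := key s₂
    rw [← h12, hcs₁] at h2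
    rw [← hPΦ a s₁ t', ← hPΦ a s₂ t', h2]
end

section
/- Under the setup above, if ‖Φ + γ P^a Φ F^π̄ − Φ F^a‖_∞ ≤ ε_ψ, then γ ‖P^a Φ − Φ P_φ^a‖_∞ ≤ ε_ψ (1 + γ). -/
open Matrix BigOperators

attribute [local instance] Matrix.linftyOpNormedAddCommGroup Matrix.linftyOpNormedRing
attribute [local instance] Matrix.linftyOpNormedSpace

theorem stmt_11 {S T : Type*} [Fintype S] [Fintype T] [DecidableEq S] [DecidableEq T]
    (γ εψ : ℝ) (hγ0 : 0 ≤ γ) (hγ1 : γ < 1) (hεψ : 0 ≤ εψ)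
    (Φ : Matrix S T ℝ)
    (P : Matrix S S ℝ)
    (Pφ Pπ : Matrix T T ℝ) (hPπ : ‖Pπ‖ ≤ 1)
    (Fπ : Matrix T T ℝ) (hFπ : Fπ = (1 - γ • Pπ)⁻¹)
    (Fa : Matrix T T ℝ) (hFa : Fa = 1 + γ • (Pφ * Fπ))
    (hψ : ‖Φ + γ • (P * Φ * Fπ) - Φ * Fa‖ ≤ εψ) :
    γ * ‖P * Φ - Φ * Pφ‖ ≤ εψ * (1 + γ) := by
  rcases isEmpty_or_nonempty T with hT | hT
  · have : P * Φ - Φ * Pφ = 0 := Subsingleton.elim _ _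
    rw [this, norm_zero, mul_zero]
    positivity
  have hlt : ‖γ • Pπ‖ < 1 := by
    rw [norm_smul, Real.norm_of_nonneg hγ0]
    calc γ * ‖Pπ‖ ≤ γ * 1 := mul_le_mul_of_nonneg_left hPπ hγ0
      _ = γ := mul_one γ
      _ < 1 := hγ1
  have hu : IsUnit (1 - γ • Pπ) := (Units.oneSub (γ • Pπ) hlt).isUnit
  have hdet : IsUnit (1 - γ • Pπ).det := (Matrix.isUnit_iff_isUnit_det _).mp hu
  have hFmul : Fπ * (1 - γ • Pπ) = 1 := by
    rw [hFπ]; exact Matrix.nonsing_inv_mul _ hdet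
  have key : (Φ + γ • (P * Φ * Fπ) - Φ * Fa) * (1 - γ • Pπ)
      = γ • (P * Φ - Φ * Pφ) := by
    have h1 : Φ + γ • (P * Φ * Fπ) - Φ * Fa = (γ • (P * Φ - Φ * Pφ)) * Fπ := by
      rw [hFa, Matrix.mul_add, Matrix.mul_one, Matrix.mul_smul, Matrix.smul_mul,
        Matrix.sub_mul, Matrix.mul_assoc Φ Pφ Fπ, smul_sub, Matrix.mul_assoc]
      abel
    rw [h1, Matrix.mul_assoc, hFmul, Matrix.mul_one]
  have hnorm1 : ‖(1 : Matrix T T ℝ) - γ • Pπ‖ ≤ 1 + γ :=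
    calc ‖(1 : Matrix T T ℝ) - γ • Pπ‖ ≤ ‖(1 : Matrix T T ℝ)‖ + ‖γ • Pπ‖ := norm_sub_le _ _
      _ ≤ 1 + γ := by
          rw [norm_one, norm_smul, Real.norm_of_nonneg hγ0]
          have : γ * ‖Pπ‖ ≤ γ := by
            calc γ * ‖Pπ‖ ≤ γ * 1 := mul_le_mul_of_nonneg_left hPπ hγ0
              _ = γ := mul_one γ
          linarith
  have hsm : γ * ‖P * Φ - Φ * Pφ‖ = ‖γ • (P * Φ - Φ * Pφ)‖ := by
    rw [norm_smul, Real.norm_of_nonneg hγ0]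
  calc γ * ‖P * Φ - Φ * Pφ‖ = ‖γ • (P * Φ - Φ * Pφ)‖ := hsm
    _ = ‖(Φ + γ • (P * Φ * Fπ) - Φ * Fa) * (1 - γ • Pπ)‖ := by rw [key]
    _ ≤ ‖Φ + γ • (P * Φ * Fπ) - Φ * Fa‖ * ‖(1 : Matrix T T ℝ) - γ • Pπ‖ := Matrix.linfty_opNorm_mul _ _
    _ ≤ εψ * (1 + γ) := by
        apply mul_le_mul hψ hnorm1 (norm_nonneg _) hεψ
end
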